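/- Let a, b, c, z be distinct points in ℂ, and let d = min(|z-a|, |z-b|, |z-c|). Then the integral (1/π) ∬_ℂ |(z-a)(z-b)(z-c)| / (|w-a||w-b||w-c||w-z|) dA(w) is finite, positive, and bounded below by d. -/

import Mathlib

/-!
Comparing with the distance to the nearest pole, the integrand is dominated by a sum of translates
of the radial function `(‖w‖ * (1 + ‖w‖) ^ 3)⁻¹`, which is integrable in the plane: like `‖w‖⁻¹`
near `0` and like `‖w‖⁻⁴` at infinity. For the lower bound, the triangle inequality gives
`‖w - p‖ / ‖z - p‖ ≤ (d + ‖w - z‖) / d` for `p = a, b, c`, so the integrand is at least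
`(d / (d + ‖w - z‖)) ^ 3 / ‖w - z‖`, whose integral is `π * d` in polar coordinates.
-/

open MeasureTheory Set Filter Finset Module

section Domination

variable {E : Type*} [NormedAddCommGroup E]

lemma one_add_norm_sub_mul_norm_sub_le {p q w : E} (h : ‖w - q‖ ≤ ‖w - p‖) :
    (1 + ‖w - q‖) * ‖p - q‖ ≤ (2 + ‖p - q‖) * ‖w - p‖ := by
  have htri : ‖p - q‖ ≤ ‖w - p‖ + ‖w - q‖ := by
    simpa only [norm_sub_rev p w] using norm_sub_le_norm_sub_add_norm_sub p w q
  nlinarith [norm_nonneg (p - q)]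

lemma prod_inv_norm_sub_le_sum [DecidableEq E] {S : Finset E} (hS : S.Nonempty) (w : E) :
    ∏ p ∈ S, ‖w - p‖⁻¹ ≤ ∑ q ∈ S, (∏ p ∈ S.erase q, (2 + ‖p - q‖) / ‖p - q‖) *
      (‖w - q‖ * (1 + ‖w - q‖) ^ (#S - 1))⁻¹ := by
  have hterm : ∀ q ∈ S, 0 ≤ (∏ p ∈ S.erase q, (2 + ‖p - q‖) / ‖p - q‖) *
      (‖w - q‖ * (1 + ‖w - q‖) ^ (#S - 1))⁻¹ := fun q _ => by positivity
  by_cases hw : w ∈ S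
  · rw [prod_eq_zero hw (by simp)]
    exact sum_nonneg hterm
  obtain ⟨q, hqS, hq⟩ := S.exists_min_image (fun p => ‖w - p‖) hS
  refine le_trans ?_ (single_le_sum hterm hqS)
  have hfactor : ∀ p ∈ S.erase q, ‖w - p‖⁻¹ ≤ (2 + ‖p - q‖) / ‖p - q‖ * (1 + ‖w - q‖)⁻¹ := by
    intro p hp
    have hpq : 0 < ‖p - q‖ := norm_pos_iff.2 (sub_ne_zero.2 (ne_of_mem_erase hp))
    have hwp : 0 < ‖w - p‖ := norm_pos_iff.2 (sub_ne_zero.2 fun h => hw (h ▸ mem_of_mem_erase hp))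
    rw [show (2 + ‖p - q‖) / ‖p - q‖ * (1 + ‖w - q‖)⁻¹ = (2 + ‖p - q‖) / (‖p - q‖ * (1 + ‖w - q‖))
      by field_simp, inv_eq_one_div, div_le_div_iff₀ hwp (by positivity)]
    nlinarith [one_add_norm_sub_mul_norm_sub_le (hq p (mem_of_mem_erase hp))]
  calc ∏ p ∈ S, ‖w - p‖⁻¹ = ‖w - q‖⁻¹ * ∏ p ∈ S.erase q, ‖w - p‖⁻¹ := (mul_prod_erase S _ hqS).symm
    _ ≤ ‖w - q‖⁻¹ * ∏ p ∈ S.erase q, ((2 + ‖p - q‖) / ‖p - q‖ * (1 + ‖w - q‖)⁻¹) := by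
      gcongr with p hp
      exact hfactor p hp
    _ = _ := by
      rw [prod_mul_distrib, prod_const, card_erase_of_mem hqS, mul_inv, inv_pow]
      ring

lemma div_add_norm_sub_le_div_norm_sub {p w z : E} {d : ℝ} (hd : 0 < d) (hdp : d ≤ ‖z - p‖)
    (hwp : w ≠ p) : d / (d + ‖w - z‖) ≤ ‖z - p‖ / ‖w - p‖ := by
  rw [div_le_div_iff₀ (by positivity) (norm_pos_iff.2 (sub_ne_zero.2 hwp))]
  have htri : ‖w - p‖ ≤ ‖w - z‖ + ‖z - p‖ := norm_sub_le_norm_sub_add_norm_sub w z p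
  nlinarith [norm_nonneg (w - z)]

lemma div_add_norm_sub_pow_card_le_prod {S : Finset E} {w z : E} {d : ℝ} (hd : 0 < d)
    (hdS : ∀ p ∈ S, d ≤ ‖z - p‖) (hw : w ∉ S) :
    (d / (d + ‖w - z‖)) ^ #S ≤ ∏ p ∈ S, ‖z - p‖ / ‖w - p‖ := by
  rw [← prod_const]
  exact prod_le_prod (fun _ _ => by positivity) fun p hp =>
    div_add_norm_sub_le_div_norm_sub hd (hdS p hp) (ne_of_mem_of_not_mem hp hw).symm

end Domination

section Integrability

variable {E : Type*} [NormedAddCommGroup E] [NormedSpace ℝ E] [FiniteDimensional ℝ E]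
  [MeasurableSpace E] [BorelSpace E] (μ : Measure E) [μ.IsAddHaarMeasure]

lemma pow_mul_inv_le_inv_one_add_sq {n k : ℕ} (hn : 2 ≤ n) (hk : n ≤ k) {y : ℝ} (hy : 0 < y) :
    y ^ (n - 1) * (y * (1 + y) ^ k)⁻¹ ≤ ((1 + y) ^ 2)⁻¹ := by
  obtain ⟨m, rfl⟩ := Nat.exists_eq_add_of_le' hn
  obtain ⟨j, rfl⟩ := Nat.exists_eq_add_of_le' hk
  have hy1 : 1 ≤ 1 + y := by linarith
  calc y ^ (m + 2 - 1) * (y * (1 + y) ^ (j + (m + 2)))⁻¹ = y ^ m / (1 + y) ^ (j + (m + 2)) := by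
        rw [show m + 2 - 1 = m + 1 by omega]; field_simp; ring
    _ ≤ (1 + y) ^ m / (1 + y) ^ (j + (m + 2)) := by gcongr; linarith
    _ = ((1 + y) ^ 2)⁻¹ * ((1 + y) ^ j)⁻¹ := by rw [pow_add, pow_add]; field_simp
    _ ≤ ((1 + y) ^ 2)⁻¹ :=
      mul_le_of_le_one_right (by positivity) (inv_le_one_of_one_le₀ (one_le_pow₀ hy1))

lemma integrable_inv_norm_mul_one_add_norm_pow (hE : 2 ≤ finrank ℝ E) {k : ℕ}
    (hk : finrank ℝ E ≤ k) : Integrable (fun x : E => (‖x‖ * (1 + ‖x‖) ^ k)⁻¹) μ := by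
  have : Nontrivial E := Module.nontrivial_of_finrank_pos (R := ℝ) (by omega)
  refine (integrable_fun_norm_addHaar μ (f := fun y => (y * (1 + y) ^ k)⁻¹)).2 ?_
  have hdom : Integrable (fun y : ℝ => ((1 + ‖y‖) ^ 2)⁻¹) := by
    simpa [Real.rpow_neg, Real.rpow_two] using
      integrable_one_add_norm (E := ℝ) (r := 2) (by norm_num)
  refine hdom.integrableOn.mono' (by fun_prop) ?_
  filter_upwards [ae_restrict_mem measurableSet_Ioi] with y (hy : 0 < y)
  rw [Real.norm_of_nonneg hy.le, smul_eq_mul, Real.norm_of_nonneg (by positivity)]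
  exact pow_mul_inv_le_inv_one_add_sq hE hk hy

lemma integrable_prod_inv_norm_sub [DecidableEq E] (hE : 2 ≤ finrank ℝ E) {S : Finset E}
    (hS : finrank ℝ E < #S) : Integrable (fun x : E => ∏ p ∈ S, ‖x - p‖⁻¹) μ := by
  have hweight := integrable_inv_norm_mul_one_add_norm_pow μ hE (k := #S - 1) (by omega)
  refine (integrable_finsetSum S fun q _ => (hweight.comp_sub_right q).const_mul
      (∏ p ∈ S.erase q, (2 + ‖p - q‖) / ‖p - q‖)).mono' (by fun_prop) (ae_of_all _ fun x => ?_)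
  rw [Real.norm_of_nonneg (by positivity)]
  exact prod_inv_norm_sub_le_sum (card_pos.1 (by omega)) x

end Integrability

lemma integral_Ioi_div_add_pow_three {d : ℝ} (hd : 0 < d) :
    ∫ y in Ioi (0 : ℝ), (d / (d + y)) ^ 3 = d / 2 := by
  have hderiv : ∀ y ∈ Ici (0 : ℝ),
      HasDerivAt (fun t => -(d ^ 3 / 2) * ((d + t) ^ 2)⁻¹) ((d / (d + y)) ^ 3) y := by
    intro y (hy : 0 ≤ y)
    have hdy : d + y ≠ 0 := by positivity
    refine ((((hasDerivAt_id' y).const_add d).pow 2).inv (pow_ne_zero 2 hdy)).const_mul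
      (-(d ^ 3 / 2)) |>.congr_deriv ?_
    simp only [Pi.pow_apply]
    field_simp
    ring
  have hlim : Tendsto (fun t => -(d ^ 3 / 2) * ((d + t) ^ 2)⁻¹) atTop (nhds 0) := by
    simpa using ((tendsto_pow_atTop two_ne_zero).comp
      (tendsto_atTop_add_const_left _ d tendsto_id)).inv_tendsto_atTop.const_mul (-(d ^ 3 / 2))
  rw [integral_Ioi_of_hasDerivAt_of_nonneg' hderiv (fun y (hy : 0 < y) => by positivity) hlim]
  field_simp
  ring

lemma integral_div_add_norm_sub_pow_three_mul_inv_norm_sub (z : ℂ) {d : ℝ} (hd : 0 < d) :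
    ∫ w : ℂ, (d / (d + ‖w - z‖)) ^ 3 * ‖w - z‖⁻¹ = Real.pi * d := by
  have hradial : EqOn (fun y : ℝ => y ^ (finrank ℝ ℂ - 1) • ((d / (d + y)) ^ 3 * y⁻¹))
      (fun y => (d / (d + y)) ^ 3) (Ioi 0) := by
    intro y (hy : 0 < y)
    simp only [Complex.finrank_real_complex, Nat.add_one_sub_one, pow_one, smul_eq_mul]
    field_simp
  rw [integral_sub_right_eq_self (fun w : ℂ => (d / (d + ‖w‖)) ^ 3 * ‖w‖⁻¹) z,
    integral_fun_norm_addHaar volume (fun y => (d / (d + y)) ^ 3 * y⁻¹),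
    setIntegral_congr_fun measurableSet_Ioi hradial, integral_Ioi_div_add_pow_three hd,
    Complex.finrank_real_complex, measureReal_def, Complex.volume_ball]
  simp
  ring

theorem stmt_16 (a b c z : ℂ) (hab : a ≠ b) (hbc : b ≠ c) (hac : a ≠ c)
    (hza : z ≠ a) (hzb : z ≠ b) (hzc : z ≠ c)
    (d : ℝ) (hd : d = min (‖z - a‖) (min (‖z - b‖) (‖z - c‖))) :
    let f : ℂ → ℝ := fun w =>
      ‖(z - a) * (z - b) * (z - c)‖ /
        (‖w - a‖ * ‖w - b‖ * ‖w - c‖ * ‖w - z‖)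
    Integrable f volume ∧
    0 < (1 / Real.pi) * ∫ w : ℂ, f w ∧
    d ≤ (1 / Real.pi) * ∫ w : ℂ, f w := by
  intro f
  set S : Finset ℂ := {a, b, c}
  have hprodS (g : ℂ → ℝ) : ∏ p ∈ S, g p = g a * g b * g c := by
    simp [S, hab, hac, hbc, mul_assoc]
  have hzS : z ∉ S := by simp [S, hza, hzb, hzc]
  have hcard : #S = 3 := card_eq_three.2 ⟨a, b, c, hab, hac, hbc, rfl⟩
  have hf_upper : f = fun w => (∏ p ∈ S, ‖z - p‖) * ∏ p ∈ insert z S, ‖w - p‖⁻¹ := by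
    funext w
    simp only [f, prod_insert hzS, hprodS, norm_mul, div_eq_mul_inv, mul_inv]
    ring
  have hf_lower : f = fun w => (∏ p ∈ S, ‖z - p‖ / ‖w - p‖) * ‖w - z‖⁻¹ := by
    funext w
    simp only [f, hprodS, norm_mul, div_eq_mul_inv, mul_inv]
    ring
  have hd0 : 0 < d := by simpa [hd, sub_eq_zero] using ⟨hza, hzb, hzc⟩
  have hdS : ∀ p ∈ S, d ≤ ‖z - p‖ := by simp [S, hd]
  have hf_int : Integrable f := by
    rw [hf_upper]
    refine (integrable_prod_inv_norm_sub volume (by simp) ?_).const_mul _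
    simp [card_insert_of_notMem hzS, hcard]
  have hf_ge : ∀ᵐ w : ℂ, (d / (d + ‖w - z‖)) ^ 3 * ‖w - z‖⁻¹ ≤ f w := by
    filter_upwards [measure_eq_zero_iff_ae_notMem.1 (S.finite_toSet.measure_zero volume)] with w hw
    rw [hf_lower, ← hcard]
    refine mul_le_mul_of_nonneg_right ?_ (by positivity)
    exact div_add_norm_sub_pow_card_le_prod hd0 hdS hw
  have hd_le : d ≤ (1 / Real.pi) * ∫ w, f w := by
    rw [one_div_mul_eq_div, le_div_iff₀ Real.pi_pos, mul_comm,
      ← integral_div_add_norm_sub_pow_three_mul_inv_norm_sub z hd0]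
    exact integral_mono_of_nonneg (ae_of_all _ fun w => by positivity) hf_int hf_ge
  exact ⟨hf_int, hd0.trans_le hd_le, hd_le⟩
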